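/- arXiv:1508.02173 — 6 statements merged into one kernel-verified Lean document; each statement's English description precedes it below -/
import Mathlib

section
/- In the star graph S_n (Cayley graph of the symmetric group on n elements with generating set the transpositions (1,i) for 2 ≤ i ≤ n), any two distinct non-adjacent vertices have at most one common neighbor. -/
/-!
If `z = x * (0 i) = y * (0 j)` is a common neighbor of `x ≠ y`, then `x⁻¹ * y = (0 i) * (0 j)`
with `i ≠ j`, and the inverse of this product sends `0` to `i`. So `x` and `y` determine `i`,
hence `z`.
-/

/-- The star graph `S_n`: vertices are permutations of `Fin n`, and `p ~ q` iff
`q = p * (1, i)` for some transposition `(1, i)` with `i ≠ 1` (here index `0` plays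
the role of `1`). -/
def starGraph (n : ℕ) [NeZero n] : SimpleGraph (Equiv.Perm (Fin n)) where
  Adj p q := ∃ i : Fin n, i ≠ 0 ∧ q = p * Equiv.swap 0 i
  symm := by
    constructor
    rintro p q ⟨i, hi, rfl⟩
    exact ⟨i, hi, by rw [mul_assoc, Equiv.swap_mul_self, mul_one]⟩
  loopless := by
    constructor
    rintro p ⟨i, hi, h⟩
    have hs : Equiv.swap (0 : Fin n) i = 1 := (left_eq_mul.mp h)
    exact hi (Equiv.swap_eq_one_iff.mp hs).symm

open Equiv

theorem Equiv.inv_swap_mul_swap_apply_left {α : Type*} [DecidableEq α] {a i j : α}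
    (hi : i ≠ a) (hij : i ≠ j) : (swap a i * swap a j)⁻¹ a = i := by
  rw [mul_inv_rev, swap_inv, swap_inv, Perm.mul_apply, swap_apply_left,
    swap_apply_of_ne_of_ne hi hij]

theorem starGraph_commonNeighbors_subset_singleton {n : ℕ} [NeZero n]
    {x y : Perm (Fin n)} (hxy : x ≠ y) :
    (starGraph n).commonNeighbors x y ⊆ {x * swap 0 ((y⁻¹ * x) 0)} := by
  rintro z ⟨⟨i, hi, rfl⟩, j, -, hz⟩
  have hy : y = x * (swap 0 i * swap 0 j) := by
    rw [← mul_assoc, hz, mul_assoc, swap_mul_self, mul_one]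
  have hij : i ≠ j := by
    rintro rfl
    exact hxy (by rw [hy, swap_mul_self, mul_one])
  have hyx : y⁻¹ * x = (swap 0 i * swap 0 j)⁻¹ := by
    rw [hy]
    group
  rw [Set.mem_singleton_iff, hyx, inv_swap_mul_swap_apply_left hi hij]

theorem starGraph_common_neighbors_le_one_general (n : ℕ) [NeZero n]
    (x y : Equiv.Perm (Fin n)) (hxy : x ≠ y) :
    ((starGraph n).commonNeighbors x y).ncard ≤ 1 :=
  (Set.ncard_le_ncard (starGraph_commonNeighbors_subset_singleton hxy)).trans
    (Set.ncard_singleton _).le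

/-- In the star graph `S_n`, any two distinct non-adjacent vertices have at most one
common neighbor. -/
theorem starGraph_common_neighbors_le_one (n : ℕ) [NeZero n]
    (x y : Equiv.Perm (Fin n)) (hxy : x ≠ y) (hadj : ¬ (starGraph n).Adj x y) :
    ((starGraph n).commonNeighbors x y).ncard ≤ 1 :=
  starGraph_common_neighbors_le_one_general n x y hxy
end

section
/- In the (n,k)-arrangement graph A_{n,k} with n ≥ k + 2, any two adjacent vertices have exactly n − k − 1 common neighbors. -/
/-!
A common neighbour `r` of two arrangements `p`, `q` that differ only at position `i` must
itself agree with `p` away from `i`. Hence the common neighbours are exactly the arrangements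
obtained from `p` by putting at position `i` a symbol outside `range p ∪ {q i}`, a set of
`k + 1` symbols, and every such symbol gives an arrangement.
-/

/-- The `(n,k)`-arrangement graph `A_{n,k}`: vertices are arrangements (injections)
of `k` elements from `{1, …, n}`, and two arrangements are adjacent iff they differ
in exactly one position. -/
def arrGraph (n k : ℕ) : SimpleGraph (Fin k ↪ Fin n) where
  Adj p q := ∃ i : Fin k, p i ≠ q i ∧ ∀ j : Fin k, j ≠ i → p j = q j
  symm := by
    constructor
    rintro p q ⟨i, hi, hj⟩
    exact ⟨i, hi.symm, fun j hji => (hj j hji).symm⟩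
  loopless := by
    constructor
    rintro p ⟨i, hi, -⟩
    exact hi rfl

section

variable {ι β : Type*}

theorem Function.eq_of_ne_of_common_neighbor {p q r : ι → β} {i a b : ι}
    (hi : p i ≠ q i) (hpq : ∀ j ≠ i, p j = q j)
    (hpa : p a ≠ r a) (hpr : ∀ j ≠ a, p j = r j) (hqr : ∀ j ≠ b, q j = r j) :
    ∀ j ≠ i, r j = p j := by
  intro j hji
  by_cases hja : j = a
  · subst hja
    by_cases hbj : b = j
    · subst hbj
      exact absurd ((hpr i hji.symm).trans (hqr i hji.symm).symm) hi
    · exact absurd ((hpq j hji).trans (hqr j (Ne.symm hbj))) hpa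
  · exact (hpr j hja).symm

theorem Function.Embedding.ncard_setOf_eq_off (p : ι ↪ β) (i : ι) {s : Set β}
    (hs : Disjoint s (Set.range p)) :
    {r : ι ↪ β | r i ∈ s ∧ ∀ j ≠ i, r j = p j}.ncard = s.ncard := by
  classical
  refine Set.ncard_congr (fun r _ => r i) (fun r hr => hr.1) ?_ ?_
  · rintro r r' ⟨-, hr⟩ ⟨-, hr'⟩ (hri : r i = r' i)
    ext j
    by_cases hj : j = i
    · subst hj; exact hri
    · rw [hr j hj, hr' j hj]
  · intro x hx
    have hpx : ∀ j, p j ≠ x := fun j hj => hs.notMem_of_mem_left hx ⟨j, hj⟩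
    exact ⟨p.setValue i x, ⟨by simpa using hx,
      fun j hj => Function.Embedding.setValue_eq_of_ne hj (hpx j)⟩, by simp⟩

end

theorem arrGraph_commonNeighbors_eq {n k : ℕ} {p q : Fin k ↪ Fin n} {i : Fin k}
    (hi : p i ≠ q i) (hpq : ∀ j ≠ i, p j = q j) :
    (arrGraph n k).commonNeighbors p q =
      {r | r i ∈ (insert (q i) (Set.range p))ᶜ ∧ ∀ j ≠ i, r j = p j} := by
  ext r
  have eq_of_agree {s : Fin k ↪ Fin n} (hs : ∀ j ≠ i, s j = r j) (hrs : r i = s i) : s = r :=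
    DFunLike.ext _ _ fun j => if hj : j = i then hj ▸ hrs.symm else hs j hj
  constructor
  · rintro ⟨hpr, hqr⟩
    have ⟨a, hpa, hpr'⟩ := hpr
    have ⟨b, _, hqr'⟩ := hqr
    have hr := Function.eq_of_ne_of_common_neighbor hi hpq hpa hpr' hqr'
    refine ⟨?_, hr⟩
    rintro (hqi | ⟨j, hj⟩)
    · exact (arrGraph n k).ne_of_adj hqr
        (eq_of_agree (fun j hj => ((hr j hj).trans (hpq j hj)).symm) hqi)
    · by_cases hji : j = i
      · exact (arrGraph n k).ne_of_adj hpr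
          (eq_of_agree (fun j hj => (hr j hj).symm) (hji ▸ hj).symm)
      · exact hji (r.injective ((hr j hji).trans hj))
  · rintro ⟨hri, hr⟩
    rw [Set.mem_compl_iff, Set.mem_insert_iff, not_or] at hri
    exact ⟨⟨i, fun h => hri.2 ⟨i, h⟩, fun j hj => (hr j hj).symm⟩,
      ⟨i, fun h => hri.1 h.symm, fun j hj => ((hpq j hj).symm.trans (hr j hj).symm)⟩⟩

theorem arrGraph_common_neighbors_adj_general (n k : ℕ)
    (p q : Fin k ↪ Fin n) (hpq : (arrGraph n k).Adj p q) :
    ((arrGraph n k).commonNeighbors p q).ncard = n - k - 1 := by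
  obtain ⟨i, hi, hpq⟩ := hpq
  have hqi : q i ∉ Set.range p := by
    rintro ⟨j, hj⟩
    by_cases hji : j = i
    · exact hi (hji ▸ hj)
    · exact hji (q.injective ((hpq j hji).symm.trans hj))
  rw [arrGraph_commonNeighbors_eq hi hpq,
    p.ncard_setOf_eq_off i (disjoint_compl_left.mono_right (Set.subset_insert _ _)),
    Set.ncard_compl, Set.ncard_insert_of_notMem hqi, Set.ncard_range_of_injective p.injective]
  simp [Nat.sub_sub]

/-- In `A_{n,k}` with `n ≥ k + 2`, any two adjacent vertices have exactly
`n - k - 1` common neighbors. -/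
theorem arrGraph_common_neighbors_adj (n k : ℕ) (hn : k + 2 ≤ n)
    (p q : Fin k ↪ Fin n) (hpq : (arrGraph n k).Adj p q) :
    ((arrGraph n k).commonNeighbors p q).ncard = n - k - 1 :=
  arrGraph_common_neighbors_adj_general n k p q hpq
end

section
/- In the (n,k)-arrangement graph A_{n,k} with n ≥ k + 2, any two non-adjacent vertices have at most 2 common neighbors. -/
namespace arrGraph

open Function Set

variable {n k : ℕ}

theorem exists_eq_update_of_mem_commonNeighbors {p q r : Fin k ↪ Fin n} (hne : p ≠ q)
    (hpq : ¬ (arrGraph n k).Adj p q) (hr : r ∈ (arrGraph n k).commonNeighbors p q) :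
    ∃ i j, i ≠ j ∧ {x | p x ≠ q x} = {i, j} ∧ ⇑r = update (⇑p) i (q i) := by
  obtain ⟨⟨i, hpri, hpr⟩, ⟨j, hqrj, hqr⟩⟩ := hr
  have hpq_off : ∀ x, x ≠ i → x ≠ j → p x = q x := fun x hxi hxj =>
    (hpr x hxi).trans (hqr x hxj).symm
  have hij : i ≠ j := by
    rintro rfl
    have hpqi : p i ≠ q i := fun h =>
      hne (DFunLike.ext _ _ fun x => if hx : x = i then hx ▸ h else hpq_off x hx hx)
    exact hpq ⟨i, hpqi, fun x hx => hpq_off x hx hx⟩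
  have hri : r i = q i := (hqr i hij).symm
  have hrj : r j = p j := (hpr j hij.symm).symm
  refine ⟨i, j, hij, ?_, ?_⟩
  · ext x
    simp only [mem_ofPred_eq, mem_insert_iff, mem_singleton_iff]
    refine ⟨fun hx => ?_, ?_⟩
    · by_contra! h
      exact hx (hpq_off x h.1 h.2)
    · rintro (rfl | rfl)
      · exact hri ▸ hpri
      · exact hrj ▸ hqrj.symm
  · funext x
    by_cases hx : x = i
    · subst hx
      rw [update_self, hri]
    · rw [update_of_ne hx, hpr x hx]

end arrGraph

theorem arrGraph_common_neighbors_nonadj_general (n k : ℕ)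
    (p q : Fin k ↪ Fin n) (hne : p ≠ q) (hpq : ¬ (arrGraph n k).Adj p q) :
    ((arrGraph n k).commonNeighbors p q).ncard ≤ 2 := by
  obtain hempty | ⟨r₀, hr₀⟩ := ((arrGraph n k).commonNeighbors p q).eq_empty_or_nonempty
  · simp [hempty]
  obtain ⟨i₀, j₀, hij₀, hdiff, -⟩ := arrGraph.exists_eq_update_of_mem_commonNeighbors hne hpq hr₀
  have hmaps : Set.MapsTo (⇑) ((arrGraph n k).commonNeighbors p q)
      ((fun i => Function.update (⇑p) i (q i)) '' {i₀, j₀}) := by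
    intro r hr
    obtain ⟨i, j, -, hdiff', hr⟩ := arrGraph.exists_eq_update_of_mem_commonNeighbors hne hpq hr
    have hi : i ∈ ({i₀, j₀} : Set (Fin k)) := hdiff ▸ hdiff' ▸ Set.mem_insert i {j}
    exact ⟨i, hi, hr.symm⟩
  calc ((arrGraph n k).commonNeighbors p q).ncard
      ≤ ((fun i => Function.update (⇑p) i (q i)) '' {i₀, j₀}).ncard :=
        Set.ncard_le_ncard_of_injOn _ hmaps DFunLike.coe_injective.injOn (Set.toFinite _)
    _ ≤ ({i₀, j₀} : Set (Fin k)).ncard := Set.ncard_image_le (Set.toFinite _)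
    _ = 2 := Set.ncard_pair hij₀

/-- In `A_{n,k}` with `n ≥ k + 2`, any two distinct non-adjacent vertices have at
most `2` common neighbors. -/
theorem arrGraph_common_neighbors_nonadj (n k : ℕ) (hn : k + 2 ≤ n)
    (p q : Fin k ↪ Fin n) (hne : p ≠ q) (hpq : ¬ (arrGraph n k).Adj p q) :
    ((arrGraph n k).commonNeighbors p q).ncard ≤ 2 :=
  arrGraph_common_neighbors_nonadj_general n k p q hne hpq
end

section
/- In the (n,k)-arrangement graph A_{n,k} with n ≥ k + 2 and k ≥ 2, every edge is contained in a chordless 4-cycle; in fact for every edge pq differing in position i, and every position j ≠ i, there is a chordless 4-cycle (p, q, x_j, y_j) where x_j and y_j are obtained from q and p respectively by changing position j to a common new symbol. -/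
open Function

namespace Function.Embedding

theorem exists_notMem_range_ne {α β : Type*} [Fintype α] [Fintype β]
    (f : α ↪ β) (c : β) (h : Fintype.card α + 1 < Fintype.card β) :
    ∃ b, b ∉ Set.range f ∧ b ≠ c := by
  classical
  have hcard : (insert c (Finset.univ.map f)).card < (Finset.univ : Finset β).card :=
    calc (insert c (Finset.univ.map f)).card ≤ (Finset.univ.map f).card + 1 :=
          Finset.card_insert_le _ _
      _ < _ := by simpa using h
  obtain ⟨b, -, hb⟩ := Finset.exists_mem_notMem_of_card_lt_card hcard
  simp only [Finset.mem_insert, Finset.mem_map, Finset.mem_univ, true_and, not_or] at hb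
  exact ⟨b, fun ⟨a, ha⟩ => hb.2 ⟨a, ha⟩, hb.1⟩

variable {α β : Type*} [DecidableEq α]

theorem injective_update_of_notMem_range (f : α ↪ β) (a : α) {b : β}
    (hb : b ∉ Set.range f) : Injective (update f a b) := by
  intro u v huv
  by_cases hu : u = a <;> by_cases hv : v = a
  · exact hu.trans hv.symm
  · rw [hu, update_self, update_of_ne hv] at huv
    exact absurd ⟨v, huv.symm⟩ hb
  · rw [hv, update_self, update_of_ne hu] at huv
    exact absurd ⟨u, huv⟩ hb
  · rw [update_of_ne hu, update_of_ne hv] at huv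
    exact f.injective huv

def updateFresh (f : α ↪ β) (a : α) (b : β) (hb : b ∉ Set.range f) : α ↪ β :=
  ⟨update f a b, injective_update_of_notMem_range f a hb⟩

@[simp]
theorem updateFresh_apply (f : α ↪ β) (a : α) (b : β) (hb : b ∉ Set.range f) (x : α) :
    f.updateFresh a b hb x = update f a b x :=
  rfl

end Function.Embedding

namespace arrGraph

variable {n k : ℕ} {p q : Fin k ↪ Fin n} {i j : Fin k} {b : Fin n}

theorem eq_of_adj_of_ne (h : (arrGraph n k).Adj p q) (hi : p i ≠ q i) {l : Fin k}
    (hl : l ≠ i) : p l = q l := by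
  obtain ⟨i', -, heq⟩ := h
  obtain rfl | hii' := eq_or_ne i i'
  · exact heq l hl
  · exact absurd (heq i hii') hi

theorem not_adj_of_ne_of_ne (hij : i ≠ j) (hi : p i ≠ q i) (hj : p j ≠ q j) :
    ¬ (arrGraph n k).Adj p q := fun h =>
  hj (eq_of_adj_of_ne h hi hij.symm)

theorem notMem_range_of_adj (h : (arrGraph n k).Adj p q) (hi : p i ≠ q i)
    (hbp : b ∉ Set.range p) (hbq : b ≠ q i) : b ∉ Set.range q := by
  rintro ⟨l, rfl⟩
  obtain rfl | hl := eq_or_ne l i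
  · exact hbq rfl
  · exact hbp ⟨l, eq_of_adj_of_ne h hi hl⟩

theorem adj_updateFresh (p : Fin k ↪ Fin n) (j : Fin k) (hb : b ∉ Set.range p) :
    (arrGraph n k).Adj p (p.updateFresh j b hb) :=
  ⟨j, by simpa using fun h => hb ⟨j, h⟩, fun l hl => by simp [update_of_ne hl]⟩

theorem adj_updateFresh_updateFresh (h : (arrGraph n k).Adj p q) (hi : p i ≠ q i)
    (hj : j ≠ i) (hbp : b ∉ Set.range p) (hbq : b ∉ Set.range q) :
    (arrGraph n k).Adj (p.updateFresh j b hbp) (q.updateFresh j b hbq) := by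
  refine ⟨i, by simpa [update_of_ne hj.symm] using hi, fun l hl => ?_⟩
  obtain rfl | hlj := eq_or_ne l j
  · simp
  · simpa [update_of_ne hlj] using eq_of_adj_of_ne h hi hl

theorem not_adj_updateFresh (hi : p i ≠ q i) (hj : j ≠ i) (hbp : b ∉ Set.range p)
    (hbq : b ∉ Set.range q) : ¬ (arrGraph n k).Adj p (q.updateFresh j b hbq) :=
  not_adj_of_ne_of_ne hj.symm (by simpa [update_of_ne hj.symm] using hi)
    (by simpa using fun h => hbp ⟨j, h⟩)

end arrGraph

theorem arrGraph_edge_in_chordless_C4_general (n k : ℕ) (hn : k + 2 ≤ n)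
    (p q : Fin k ↪ Fin n) (hpq : (arrGraph n k).Adj p q)
    (i : Fin k) (hi : p i ≠ q i) (j : Fin k) (hj : j ≠ i) :
    ∃ x y : Fin k ↪ Fin n,
      (arrGraph n k).Adj q x ∧ (arrGraph n k).Adj x y ∧ (arrGraph n k).Adj y p ∧
      ¬ (arrGraph n k).Adj p x ∧ ¬ (arrGraph n k).Adj q y ∧
      (∀ l : Fin k, l ≠ j → x l = q l) ∧ (∀ l : Fin k, l ≠ j → y l = p l) ∧
      x j = y j ∧ x j ∉ Set.range p ∧ x j ≠ q i := by
  open arrGraph in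
  obtain ⟨b, hbp, hbqi⟩ := p.exists_notMem_range_ne (q i) (by simp only [Fintype.card_fin]; omega)
  have hbq := notMem_range_of_adj hpq hi hbp hbqi
  refine ⟨q.updateFresh j b hbq, p.updateFresh j b hbp, adj_updateFresh q j hbq,
    adj_updateFresh_updateFresh hpq.symm hi.symm hj hbq hbp, (adj_updateFresh p j hbp).symm,
    not_adj_updateFresh hi hj hbp hbq, not_adj_updateFresh hi.symm hj hbq hbp,
    fun _ hl => by simp [update_of_ne hl], fun _ hl => by simp [update_of_ne hl], by simp,
    by simpa using hbp, by simpa using hbqi⟩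

/-- In `A_{n,k}` with `n ≥ k + 2` and `k ≥ 2`, every edge `pq` (differing in
position `i`) lies, for each position `j ≠ i`, on a chordless 4-cycle
`(p, q, x_j, y_j)`, where `x_j` and `y_j` are obtained from `q` and `p`
respectively by changing position `j` to a common new symbol. -/
theorem arrGraph_edge_in_chordless_C4 (n k : ℕ) (hn : k + 2 ≤ n) (hk : 2 ≤ k)
    (p q : Fin k ↪ Fin n) (hpq : (arrGraph n k).Adj p q)
    (i : Fin k) (hi : p i ≠ q i) (j : Fin k) (hj : j ≠ i) :
    ∃ x y : Fin k ↪ Fin n,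
      (arrGraph n k).Adj q x ∧ (arrGraph n k).Adj x y ∧ (arrGraph n k).Adj y p ∧
      ¬ (arrGraph n k).Adj p x ∧ ¬ (arrGraph n k).Adj q y ∧
      (∀ l : Fin k, l ≠ j → x l = q l) ∧ (∀ l : Fin k, l ≠ j → y l = p l) ∧
      x j = y j ∧ x j ∉ Set.range p ∧ x j ≠ q i :=
  arrGraph_edge_in_chordless_C4_general n k hn p q hpq i hi j hj
end

section
/- In the (n,k)-star graph S_{n,k} with 2 ≤ k ≤ n − 2, two vertices joined by an unswap-edge have exactly n − k − 1 common neighbors, and two non-adjacent vertices with at least one common neighbor have exactly one common neighbor. -/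
/-!
`p.setValue 0 b` swaps `p 0` with `b` if `b` occurs in `p` and overwrites `p 0` with `b`
otherwise, so the neighbours of `p` are exactly the `p.setValue 0 b` with `b ≠ p 0`; in particular
a neighbour of `p` is determined by its first symbol. If `q` is obtained from `p` by an unswap, a
common neighbour must also be an unswap of `p`, with first symbol outside `{q 0} ∪ range p`, which
leaves `n - k - 1` choices. If `p` and `q` are distinct and non-adjacent, the first symbol of a
common neighbour `r` is forced: `r 0 = p i` where `q i = p 0`, or symmetrically `r 0 = q j` where
`p j = q 0`, and one of these two positions exists.
-/

/-- The `(n,k)`-star graph `S_{n,k}`: vertices are arrangements (injections) of `k`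
elements from `{1, …, n}` (position `0` plays the role of the first position `p₁`).
A vertex `p` is adjacent to the arrangement obtained by swapping `p 0` with `p i`
for `i ≠ 0` (swap-edge), and to each arrangement obtained by replacing `p 0` with a
symbol not occurring in `p` (unswap-edge). -/
def nkStar (n k : ℕ) [NeZero k] : SimpleGraph (Fin k ↪ Fin n) where
  Adj p q :=
    (∃ i : Fin k, i ≠ 0 ∧ q 0 = p i ∧ q i = p 0 ∧
        ∀ j : Fin k, j ≠ 0 → j ≠ i → q j = p j) ∨
    (q 0 ≠ p 0 ∧ ∀ j : Fin k, j ≠ 0 → q j = p j)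
  symm := by
    constructor
    rintro p q (⟨i, hi, h1, h2, h3⟩ | ⟨h1, h2⟩)
    · exact Or.inl ⟨i, hi, h2.symm, h1.symm, fun j hj0 hji => (h3 j hj0 hji).symm⟩
    · exact Or.inr ⟨h1.symm, fun j hj => (h2 j hj).symm⟩
  loopless := by
    constructor
    rintro p (⟨i, hi, h1, -, -⟩ | ⟨h1, -⟩)
    · exact hi (p.injective h1.symm)
    · exact h1 rfl

namespace nkStar

variable {n k : ℕ} [NeZero k] {p q r : Fin k ↪ Fin n}

theorem adj_iff_eq_setValue :
    (nkStar n k).Adj p q ↔ q 0 ≠ p 0 ∧ q = p.setValue 0 (q 0) := by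
  constructor
  · rintro (⟨i, hi, hq0, hqi, htail⟩ | ⟨hq0, htail⟩)
    · refine ⟨fun h => hi (p.injective (hq0.symm.trans h)), ?_⟩
      ext j
      simp only [Function.Embedding.setValue, Function.Embedding.coeFn_mk]
      grind [p.injective.eq_iff]
    · refine ⟨hq0, ?_⟩
      ext j
      simp only [Function.Embedding.setValue, Function.Embedding.coeFn_mk]
      grind [q.injective.eq_iff]
  · rintro ⟨hq0, hq⟩
    by_cases hmem : q 0 ∈ Set.range p
    · obtain ⟨i, hi⟩ := hmem
      have hi0 : i ≠ 0 := by rintro rfl; exact hq0 hi.symm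
      refine Or.inl ⟨i, hi0, hi.symm, ?_, fun j hj0 hji => ?_⟩ <;> rw [hq, ← hi]
      · exact p.setValue_right_apply_eq 0 i
      · exact Function.Embedding.setValue_eq_of_ne hj0 (p.injective.ne hji)
    · refine Or.inr ⟨hq0, fun j hj0 => ?_⟩
      rw [hq]
      exact Function.Embedding.setValue_eq_of_ne hj0 fun h => hmem ⟨j, h⟩

theorem apply_eq_of_adj_of_ne {j : Fin k} (hq : (nkStar n k).Adj p q) (hj : j ≠ 0)
    (hpj : p j ≠ q 0) : q j = p j := by
  rw [(adj_iff_eq_setValue.1 hq).2]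
  exact Function.Embedding.setValue_eq_of_ne hj hpj

theorem apply_eq_apply_zero_of_adj {j : Fin k} (hq : (nkStar n k).Adj p q) (hpj : p j = q 0) :
    q j = p 0 := by
  rw [(adj_iff_eq_setValue.1 hq).2, ← hpj]
  exact p.setValue_right_apply_eq 0 j

theorem eq_of_adj_of_adj_of_apply_zero_eq (hq : (nkStar n k).Adj p q)
    (hr : (nkStar n k).Adj p r) (h : q 0 = r 0) : q = r := by
  rw [(adj_iff_eq_setValue.1 hq).2, (adj_iff_eq_setValue.1 hr).2, h]

theorem adj_setValue {b : Fin n} (hb : b ≠ p 0) : (nkStar n k).Adj p (p.setValue 0 b) :=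
  adj_iff_eq_setValue.2 ⟨by simpa using hb, by simp⟩

theorem apply_zero_notMem_range_of_unswap (hq0 : q 0 ≠ p 0)
    (htail : ∀ j : Fin k, j ≠ 0 → q j = p j) : q 0 ∉ Set.range p := by
  rintro ⟨j, hj⟩
  rcases eq_or_ne j 0 with rfl | hj0
  · exact hq0 hj.symm
  · exact hj0 (q.injective ((htail j hj0).trans hj))

theorem commonNeighbors_eq_image_setValue_of_unswap
    (hq0 : q 0 ≠ p 0) (htail : ∀ j : Fin k, j ≠ 0 → q j = p j) :
    (nkStar n k).commonNeighbors p q = (p.setValue 0 ·) '' (insert (q 0) (Set.range p))ᶜ := by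
  ext r
  simp only [SimpleGraph.mem_commonNeighbors, Set.mem_image, Set.mem_compl_iff,
    Set.mem_insert_iff, not_or]
  constructor
  · rintro ⟨hpr, hqr⟩
    refine ⟨r 0, ⟨(adj_iff_eq_setValue.1 hqr).1, ?_⟩, (adj_iff_eq_setValue.1 hpr).2.symm⟩
    rintro ⟨i, hi⟩
    have hi0 : i ≠ 0 := by rintro rfl; exact (adj_iff_eq_setValue.1 hpr).1 hi.symm
    exact hq0 ((apply_eq_apply_zero_of_adj hqr ((htail i hi0).trans hi)).symm.trans
      (apply_eq_apply_zero_of_adj hpr hi))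
  · rintro ⟨b, ⟨hbq, hbp⟩, rfl⟩
    have hpq : p.setValue 0 b = q.setValue 0 b := by
      ext j
      rcases eq_or_ne j 0 with rfl | hj0
      · simp
      · rw [Function.Embedding.setValue_eq_of_ne hj0 fun h => hbp ⟨j, h⟩,
          Function.Embedding.setValue_eq_of_ne hj0 fun h => hbp ⟨j, (htail j hj0).symm.trans h⟩,
          htail j hj0]
    exact ⟨adj_setValue fun h => hbp ⟨0, h.symm⟩, hpq ▸ adj_setValue hbq⟩

theorem ncard_commonNeighbors_of_unswap (hq0 : q 0 ≠ p 0)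
    (htail : ∀ j : Fin k, j ≠ 0 → q j = p j) :
    ((nkStar n k).commonNeighbors p q).ncard = n - k - 1 := by
  have hinj : Function.Injective (p.setValue 0 ·) := fun a b h => by
    simpa using congr($h 0)
  rw [commonNeighbors_eq_image_setValue_of_unswap hq0 htail, Set.ncard_image_of_injective _ hinj,
    Set.ncard_compl, Set.ncard_insert_of_notMem (apply_zero_notMem_range_of_unswap hq0 htail),
    Set.ncard_range_of_injective p.injective]
  simp [Nat.sub_sub]

theorem apply_zero_ne_of_mem_commonNeighbors (hpq : p ≠ q)
    (hr : r ∈ (nkStar n k).commonNeighbors p q) : p 0 ≠ q 0 := fun h =>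
  hpq (eq_of_adj_of_adj_of_apply_zero_eq hr.1.symm hr.2.symm h)

theorem apply_zero_mem_range_of_mem_commonNeighbors (hpq : p ≠ q)
    (hr : r ∈ (nkStar n k).commonNeighbors p q) (hmem : p 0 ∈ Set.range r) :
    p 0 ∈ Set.range q := by
  obtain ⟨i, hi⟩ := hmem
  have hi0 : i ≠ 0 := by rintro rfl; exact (adj_iff_eq_setValue.1 hr.1.symm).1 hi.symm
  refine ⟨i, (apply_eq_of_adj_of_ne hr.2.symm hi0 ?_).trans hi⟩
  rw [hi]
  exact apply_zero_ne_of_mem_commonNeighbors hpq hr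

theorem apply_zero_eq_of_mem_commonNeighbors (hpq : p ≠ q)
    (hr : r ∈ (nkStar n k).commonNeighbors p q) {i : Fin k} (hi : q i = p 0) : r 0 = p i := by
  have hi0 : i ≠ 0 := by
    rintro rfl; exact apply_zero_ne_of_mem_commonNeighbors hpq hr hi.symm
  have hri : r i = p 0 := by
    by_cases h : r i = q 0
    · exact absurd (hi.symm.trans (apply_eq_apply_zero_of_adj hr.2.symm h))
        (adj_iff_eq_setValue.1 hr.1.symm).1
    · rwa [← apply_eq_of_adj_of_ne hr.2.symm hi0 h]
  exact (apply_eq_apply_zero_of_adj hr.1.symm hri).symm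

theorem apply_zero_mem_range_or_of_not_adj (hpq : p ≠ q)
    (hr : r ∈ (nkStar n k).commonNeighbors p q) (hadj : ¬ (nkStar n k).Adj p q) :
    p 0 ∈ Set.range q ∨ q 0 ∈ Set.range p := by
  by_contra! ⟨hp, hq⟩
  have hpr := mt (apply_zero_mem_range_of_mem_commonNeighbors hpq hr) hp
  have hqr := mt (apply_zero_mem_range_of_mem_commonNeighbors hpq.symm ⟨hr.2, hr.1⟩) hq
  refine hadj (Or.inr ⟨(apply_zero_ne_of_mem_commonNeighbors hpq hr).symm, fun j hj => ?_⟩)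
  rw [apply_eq_of_adj_of_ne hr.2.symm hj fun h => hqr ⟨j, h⟩,
    apply_eq_of_adj_of_ne hr.1.symm hj fun h => hpr ⟨j, h⟩]

theorem commonNeighbors_subsingleton_of_not_adj (hpq : p ≠ q) (hadj : ¬ (nkStar n k).Adj p q) :
    ((nkStar n k).commonNeighbors p q).Subsingleton := by
  intro r hr r' hr'
  refine eq_of_adj_of_adj_of_apply_zero_eq hr.1 hr'.1 ?_
  rcases apply_zero_mem_range_or_of_not_adj hpq hr hadj with ⟨i, hi⟩ | ⟨j, hj⟩
  · rw [apply_zero_eq_of_mem_commonNeighbors hpq hr hi,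
      apply_zero_eq_of_mem_commonNeighbors hpq hr' hi]
  · rw [apply_zero_eq_of_mem_commonNeighbors hpq.symm ⟨hr.2, hr.1⟩ hj,
      apply_zero_eq_of_mem_commonNeighbors hpq.symm ⟨hr'.2, hr'.1⟩ hj]

end nkStar

theorem nkStar_common_neighbors_general (n k : ℕ) [NeZero k] :
    (∀ p q : Fin k ↪ Fin n, q 0 ≠ p 0 → (∀ j : Fin k, j ≠ 0 → q j = p j) →
      ((nkStar n k).commonNeighbors p q).ncard = n - k - 1) ∧
    (∀ p q : Fin k ↪ Fin n, p ≠ q → ¬ (nkStar n k).Adj p q →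
      ((nkStar n k).commonNeighbors p q).Nonempty →
      ((nkStar n k).commonNeighbors p q).ncard = 1) :=
  ⟨fun _ _ => nkStar.ncard_commonNeighbors_of_unswap, fun _ _ hpq hadj ⟨r, hr⟩ =>
    Set.ncard_eq_one.2
      ⟨r, (nkStar.commonNeighbors_subsingleton_of_not_adj hpq hadj).eq_singleton_of_mem hr⟩⟩

/-- In `S_{n,k}` with `2 ≤ k ≤ n - 2`: two vertices joined by an unswap-edge have
exactly `n - k - 1` common neighbors, and two distinct non-adjacent vertices with
at least one common neighbor have exactly one common neighbor. -/
theorem nkStar_common_neighbors (n k : ℕ) [NeZero k] (hk : 2 ≤ k)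
    (hn : k + 2 ≤ n) :
    (∀ p q : Fin k ↪ Fin n, q 0 ≠ p 0 → (∀ j : Fin k, j ≠ 0 → q j = p j) →
      ((nkStar n k).commonNeighbors p q).ncard = n - k - 1) ∧
    (∀ p q : Fin k ↪ Fin n, p ≠ q → ¬ (nkStar n k).Adj p q →
      ((nkStar n k).commonNeighbors p q).Nonempty →
      ((nkStar n k).commonNeighbors p q).ncard = 1) :=
  nkStar_common_neighbors_general n k
end

section
/- In the dual-cube DC_n, any two non-adjacent vertices have at most 2 common neighbors. -/
/-!
`DC_n` is a subgraph of the binary hypercube on `2n+1` coordinates. In the hypercube a common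
neighbour `w` of `u ≠ v` flips one coordinate `i` of `u` and one coordinate `j` of `v`; over
`ZMod 2` two flips of the same coordinate would force `u = v`, so `i ≠ j`, the vertices `u`, `v`
differ exactly in `i` and `j`, and `w` is `u` with coordinate `i` or `j` replaced by that of `v`.
-/

/-- The dual-cube `DC_n`: vertices are binary strings `u = u_{2n} … u_0` of length
`2n+1`; `u ~ v` iff they differ in exactly one bit position `i`, where either
`0 ≤ i ≤ n-1` and `u_{2n} = v_{2n} = 0`, or `n ≤ i ≤ 2n-1` and `u_{2n} = v_{2n} = 1`,
or `i = 2n`. -/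
def dualCube (n : ℕ) : SimpleGraph (Fin (2 * n + 1) → ZMod 2) where
  Adj u v := ∃ i : Fin (2 * n + 1), u i ≠ v i ∧ (∀ j : Fin (2 * n + 1), j ≠ i → u j = v j) ∧
    ((i : ℕ) < n → u ⟨2 * n, by omega⟩ = 0) ∧
    (n ≤ (i : ℕ) ∧ (i : ℕ) < 2 * n → u ⟨2 * n, by omega⟩ = 1)
  symm := by
    constructor
    rintro u v ⟨i, hne, hag, h0, h1⟩
    have htop : (i : ℕ) < 2 * n → v ⟨2 * n, by omega⟩ = u ⟨2 * n, by omega⟩ := by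
      intro hi
      exact (hag ⟨2 * n, by omega⟩ (by simp [Fin.ext_iff]; omega)).symm
    refine ⟨i, hne.symm, fun j hj => (hag j hj).symm, ?_, ?_⟩
    · intro hi
      rw [htop (by omega)]
      exact h0 hi
    · rintro ⟨hi1, hi2⟩
      rw [htop (by omega)]
      exact h1 ⟨hi1, hi2⟩
  loopless := by
    constructor
    rintro u ⟨i, hne, -, -⟩
    exact hne rfl

open Function

theorem SimpleGraph.commonNeighbors_mono {V : Type*} {G G' : SimpleGraph V} (hle : G ≤ G')
    (u v : V) : G.commonNeighbors u v ⊆ G'.commonNeighbors u v :=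
  Set.inter_subset_inter (G.neighborSet_mono hle u) (G.neighborSet_mono hle v)

theorem ZMod.two_eq_of_ne_of_ne {a b c : ZMod 2} (ha : a ≠ c) (hb : b ≠ c) : a = b := by
  revert a b c
  decide

def hypercube (ι : Type*) : SimpleGraph (ι → ZMod 2) where
  Adj u w := ∃ i, u i ≠ w i ∧ ∀ j, j ≠ i → u j = w j
  symm := ⟨fun _ _ ⟨i, hne, hag⟩ => ⟨i, hne.symm, fun j hj => (hag j hj).symm⟩⟩
  loopless := ⟨fun _ ⟨_, hne, _⟩ => hne rfl⟩

section hypercube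

variable {ι : Type*} {u v w : ι → ZMod 2}

theorem hypercube.exists_setOf_ne_subset_pair (hw : w ∈ (hypercube ι).commonNeighbors u v) :
    ∃ i j, {k | u k ≠ v k} ⊆ {i, j} := by
  obtain ⟨⟨i, -, hagi⟩, ⟨j, -, hagj⟩⟩ := hw
  refine ⟨i, j, fun k hk => ?_⟩
  by_contra hkij
  simp only [Set.mem_insert_iff, Set.mem_singleton_iff, not_or] at hkij
  exact hk ((hagi k hkij.1).trans (hagj k hkij.2).symm)

theorem hypercube.eq_update_of_mem_commonNeighbors [DecidableEq ι] (huv : u ≠ v)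
    (hw : w ∈ (hypercube ι).commonNeighbors u v) : ∃ i, u i ≠ v i ∧ w = update u i (v i) := by
  obtain ⟨⟨i, hui, hagi⟩, ⟨j, hvj, hagj⟩⟩ := hw
  have hij : i ≠ j := by
    rintro rfl
    refine huv (funext fun k => ?_)
    by_cases hk : k = i
    · subst hk
      exact ZMod.two_eq_of_ne_of_ne hui hvj
    · exact (hagi k hk).trans (hagj k hk).symm
  have hvi : v i = w i := hagj i hij
  refine ⟨i, hvi ▸ hui, funext fun k => ?_⟩
  by_cases hk : k = i
  · subst hk
    rw [update_self, hvi]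
  · rw [update_of_ne hk, hagi k hk]

theorem hypercube.commonNeighbors_ncard_le_two (huv : u ≠ v) :
    ((hypercube ι).commonNeighbors u v).ncard ≤ 2 := by
  classical
  rcases ((hypercube ι).commonNeighbors u v).eq_empty_or_nonempty with h | ⟨w₀, hw₀⟩
  · simp [h]
  obtain ⟨i, j, hsub⟩ := hypercube.exists_setOf_ne_subset_pair hw₀
  have himage : (hypercube ι).commonNeighbors u v ⊆ (fun k => update u k (v k)) '' {i, j} := by
    intro w hw
    obtain ⟨k, hk, rfl⟩ := hypercube.eq_update_of_mem_commonNeighbors huv hw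
    exact ⟨k, hsub hk, rfl⟩
  calc ((hypercube ι).commonNeighbors u v).ncard
      ≤ ((fun k => update u k (v k)) '' {i, j}).ncard := Set.ncard_le_ncard himage (Set.toFinite _)
    _ ≤ ({i, j} : Set ι).ncard := Set.ncard_image_le (Set.toFinite _)
    _ ≤ 2 := (Set.ncard_insert_le _ _).trans (by simp)

end hypercube

theorem dualCube_le_hypercube (n : ℕ) : dualCube n ≤ hypercube (Fin (2 * n + 1)) :=
  fun _ _ ⟨i, hne, hag, _⟩ => ⟨i, hne, hag⟩

theorem dualCube_common_neighbors_general (n : ℕ) (u v : Fin (2 * n + 1) → ZMod 2)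
    (hne : u ≠ v) :
    ((dualCube n).commonNeighbors u v).ncard ≤ 2 :=
  (Set.ncard_le_ncard (SimpleGraph.commonNeighbors_mono (dualCube_le_hypercube n) u v)
    (Set.toFinite _)).trans (hypercube.commonNeighbors_ncard_le_two hne)

/-- In the dual-cube `DC_n`, any two distinct non-adjacent vertices have at most
two common neighbors. -/
theorem dualCube_common_neighbors (n : ℕ) (u v : Fin (2 * n + 1) → ZMod 2)
    (hne : u ≠ v) (hadj : ¬ (dualCube n).Adj u v) :
    ((dualCube n).commonNeighbors u v).ncard ≤ 2 :=
  dualCube_common_neighbors_general n u v hne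
end
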